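/- Let λ > 1, and for y > 0 let E_y := {(x₁,x₂) ∈ ℝ² : x₁² + λ²x₂² = y²} and μ_y := δ_{(0, y/λ)}, the Dirac measure at the top of the minor axis of E_y. Then for all y, y' > 0 and all p ∈ [1,∞), W_p(μ_y, μ_{y'}) = |y − y'|/λ = d(E_y, E_{y'}). Thus the disintegration map y ↦ μ_y is an isometry onto its image with respect to the fiber distance, even though {E_y} is not a metric foliation; this shows the full-support hypothesis in the classification theorem cannot be dropped. -/

import Mathlib

open MeasureTheory ENNReal

noncomputable section

/-- The set of couplings of two measures: measures on `X × X` with the given marginals. -/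
def couplings {X : Type*} [MeasurableSpace X] (μ ν : Measure X) : Set (Measure (X × X)) :=
  {γ | γ.map Prod.fst = μ ∧ γ.map Prod.snd = ν}

/-- The `p`-Wasserstein distance (valued in `ℝ≥0∞`):
`W_p(μ,ν) = (inf_{γ ∈ Π(μ,ν)} ∫ d(x₁,x₂)^p dγ)^{1/p}`. -/
def wassersteinE {X : Type*} [PseudoEMetricSpace X] [MeasurableSpace X] (p : ℝ)
    (μ ν : Measure X) : ℝ≥0∞ :=
  (⨅ γ ∈ couplings μ ν, ∫⁻ z, edist z.1 z.2 ^ p ∂γ) ^ (1 / p)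

/-- Distance between two subsets: `d(A,B) = inf {d(a,b) : a ∈ A, b ∈ B}`. -/
def setEDist {X : Type*} [PseudoEMetricSpace X] (A B : Set X) : ℝ≥0∞ :=
  ⨅ a ∈ A, ⨅ b ∈ B, edist a b

/-- The ellipse `E_y = {(x₁,x₂) : x₁² + λ²x₂² = y²}` in the Euclidean plane. -/
def Ell (lam y : ℝ) : Set (EuclideanSpace ℝ (Fin 2)) :=
  {x | x 0 ^ 2 + lam ^ 2 * x 1 ^ 2 = y ^ 2}

/-- The point `(a, b)` of the Euclidean plane. -/
def pt (a b : ℝ) : EuclideanSpace ℝ (Fin 2) :=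
  (WithLp.equiv 2 (Fin 2 → ℝ)).symm ![a, b]

/-- A family of closed sets (leaves) is a metric foliation if
`d(F,F') = d(x,F')` for all leaves `F, F'` and all `x ∈ F`. -/
def IsMetricFoliationFam {X ι : Type*} [PseudoEMetricSpace X] (F : ι → Set X) : Prop :=
  (∀ i, IsClosed (F i)) ∧
  ∀ i j, ∀ x ∈ F i, EMetric.infEdist x (F j) = setEDist (F i) (F j)

/-!
The map `(x₁, x₂) ↦ (x₁, λx₂)` sends `E_y` onto the circle of radius `y` and is `λ`-Lipschitz,
so by the reverse triangle inequality any two points of `E_y` and `E_{y'}` are at distance at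
least `|y − y'|/λ`; the tops of the minor axes realise this bound, and the `W_p`-distance of two
Dirac masses is the distance of their atoms. The leaves are not equidistant, however: the end
`(2, 0)` of the major axis of `E_2` is at distance at least `1 > 1/λ` from `E_1`, since `E_1`
lies in the unit disc.
-/

lemma lintegral_eq_of_mem_couplings_dirac {X : Type*} [MeasurableSpace X]
    [MeasurableSingletonClass X] {a b : X} {γ : Measure (X × X)}
    (hγ : γ ∈ couplings (Measure.dirac a) (Measure.dirac b)) (f : X × X → ℝ≥0∞) :
    ∫⁻ z, f z ∂γ = f (a, b) := by
  obtain ⟨hfst, hsnd⟩ := hγ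
  have hfst_ae : ∀ᵐ z ∂γ, z.1 = a :=
    ae_of_ae_map (p := (· = a)) measurable_fst.aemeasurable <| by simp [hfst, ae_dirac_eq]
  have hsnd_ae : ∀ᵐ z ∂γ, z.2 = b :=
    ae_of_ae_map (p := (· = b)) measurable_snd.aemeasurable <| by simp [hsnd, ae_dirac_eq]
  have hγ_univ : γ Set.univ = 1 := by
    simpa [hfst] using (Measure.map_apply measurable_fst MeasurableSet.univ (μ := γ)).symm
  calc ∫⁻ z, f z ∂γ = ∫⁻ _, f (a, b) ∂γ := lintegral_congr_ae <| by
        filter_upwards [hfst_ae, hsnd_ae] with z h1 h2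
        rw [← h1, ← h2]
    _ = f (a, b) := by rw [lintegral_const, hγ_univ, mul_one]

lemma wassersteinE_dirac_dirac {X : Type*} [PseudoEMetricSpace X] [MeasurableSpace X]
    [MeasurableSingletonClass X] (a b : X) {p : ℝ} (hp : p ≠ 0) :
    wassersteinE p (Measure.dirac a) (Measure.dirac b) = edist a b := by
  have hdirac : Measure.dirac (a, b) ∈ couplings (Measure.dirac a) (Measure.dirac b) :=
    ⟨Measure.map_dirac' measurable_fst _, Measure.map_dirac' measurable_snd _⟩
  have hcost : ⨅ γ ∈ couplings (Measure.dirac a) (Measure.dirac b),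
      ∫⁻ z, edist z.1 z.2 ^ p ∂γ = edist a b ^ p :=
    le_antisymm (iInf₂_le_of_le _ hdirac (lintegral_eq_of_mem_couplings_dirac hdirac _).le)
      (le_iInf₂ fun γ hγ => (lintegral_eq_of_mem_couplings_dirac hγ _).ge)
  rw [wassersteinE, hcost, ← ENNReal.rpow_mul, mul_one_div_cancel hp, ENNReal.rpow_one]

lemma pt_apply_zero (a b : ℝ) : pt a b 0 = a := rfl

lemma pt_apply_one (a b : ℝ) : pt a b 1 = b := rfl

lemma EuclideanSpace.norm_sq_eq_fin_two (x : EuclideanSpace ℝ (Fin 2)) :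
    ‖x‖ ^ 2 = x 0 ^ 2 + x 1 ^ 2 := by
  simp [EuclideanSpace.real_norm_sq_eq, Fin.sum_univ_two]

lemma edist_pt_zero_div {lam : ℝ} (hlam : 0 < lam) (y y' : ℝ) :
    edist (pt 0 (y / lam)) (pt 0 (y' / lam)) = ENNReal.ofReal (|y - y'| / lam) := by
  rw [edist_dist, dist_eq_norm, ← Real.sqrt_sq (norm_nonneg _),
    EuclideanSpace.norm_sq_eq_fin_two]
  simp [pt_apply_zero, pt_apply_one, ← sub_div, Real.sqrt_sq_eq_abs, abs_div, abs_of_pos hlam]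

lemma pt_zero_div_mem_Ell {lam : ℝ} (hlam : lam ≠ 0) (y : ℝ) : pt 0 (y / lam) ∈ Ell lam y := by
  simp only [Ell, Set.mem_ofPred_eq, pt_apply_zero, pt_apply_one]
  field_simp
  ring

def stretch (lam : ℝ) (x : EuclideanSpace ℝ (Fin 2)) : EuclideanSpace ℝ (Fin 2) :=
  pt (x 0) (lam * x 1)

lemma stretch_sub (lam : ℝ) (a b : EuclideanSpace ℝ (Fin 2)) :
    stretch lam (a - b) = stretch lam a - stretch lam b := by
  ext i
  fin_cases i <;> simp [stretch, pt_apply_zero, pt_apply_one, mul_sub]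

lemma norm_stretch_sq (lam : ℝ) (x : EuclideanSpace ℝ (Fin 2)) :
    ‖stretch lam x‖ ^ 2 = x 0 ^ 2 + lam ^ 2 * x 1 ^ 2 := by
  rw [EuclideanSpace.norm_sq_eq_fin_two, stretch, pt_apply_zero, pt_apply_one]
  ring

lemma mem_Ell_iff_norm_stretch {lam y : ℝ} (hy : 0 ≤ y) {x : EuclideanSpace ℝ (Fin 2)} :
    x ∈ Ell lam y ↔ ‖stretch lam x‖ = y := by
  rw [Ell, Set.mem_ofPred_eq, ← norm_stretch_sq, sq_eq_sq₀ (norm_nonneg _) hy]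

lemma norm_le_norm_stretch {lam : ℝ} (hlam : 1 ≤ lam) (x : EuclideanSpace ℝ (Fin 2)) :
    ‖x‖ ≤ ‖stretch lam x‖ := by
  refine (pow_le_pow_iff_left₀ (norm_nonneg _) (norm_nonneg _) two_ne_zero).mp ?_
  rw [norm_stretch_sq, EuclideanSpace.norm_sq_eq_fin_two]
  nlinarith [mul_le_mul_of_nonneg_right (one_le_pow₀ (n := 2) hlam) (sq_nonneg (x 1))]

lemma norm_stretch_le {lam : ℝ} (hlam : 1 ≤ lam) (x : EuclideanSpace ℝ (Fin 2)) :
    ‖stretch lam x‖ ≤ lam * ‖x‖ := by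
  have hlam0 : 0 ≤ lam := zero_le_one.trans hlam
  refine (pow_le_pow_iff_left₀ (norm_nonneg _) (by positivity) two_ne_zero).mp ?_
  rw [mul_pow, norm_stretch_sq, EuclideanSpace.norm_sq_eq_fin_two]
  nlinarith [mul_le_mul_of_nonneg_right (one_le_pow₀ (n := 2) hlam) (sq_nonneg (x 0))]

lemma abs_sub_le_mul_dist_of_mem_Ell {lam y y' : ℝ} (hlam : 1 ≤ lam) (hy : 0 ≤ y)
    (hy' : 0 ≤ y') {a b : EuclideanSpace ℝ (Fin 2)} (ha : a ∈ Ell lam y)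
    (hb : b ∈ Ell lam y') : |y - y'| ≤ lam * dist a b := by
  rw [mem_Ell_iff_norm_stretch hy] at ha
  rw [mem_Ell_iff_norm_stretch hy'] at hb
  calc |y - y'| = |‖stretch lam a‖ - ‖stretch lam b‖| := by rw [ha, hb]
    _ ≤ ‖stretch lam a - stretch lam b‖ := abs_norm_sub_norm_le _ _
    _ = ‖stretch lam (a - b)‖ := by rw [stretch_sub]
    _ ≤ lam * dist a b := by rw [dist_eq_norm]; exact norm_stretch_le hlam _

lemma setEDist_Ell {lam y y' : ℝ} (hlam : 1 ≤ lam) (hy : 0 ≤ y) (hy' : 0 ≤ y') :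
    setEDist (Ell lam y) (Ell lam y') = ENNReal.ofReal (|y - y'| / lam) := by
  have hlam0 : 0 < lam := zero_lt_one.trans_le hlam
  apply le_antisymm
  · refine iInf₂_le_of_le _ (pt_zero_div_mem_Ell hlam0.ne' y) ?_
    refine iInf₂_le_of_le _ (pt_zero_div_mem_Ell hlam0.ne' y') ?_
    rw [edist_pt_zero_div hlam0]
  · refine le_iInf₂ fun a ha => le_iInf₂ fun b hb => ?_
    rw [edist_dist]
    exact ENNReal.ofReal_le_ofReal <|
      (div_le_iff₀' hlam0).mpr (abs_sub_le_mul_dist_of_mem_Ell hlam hy hy' ha hb)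

lemma ofReal_norm_sub_le_infEDist_Ell {lam y : ℝ} (hlam : 1 ≤ lam) (hy : 0 ≤ y)
    (x : EuclideanSpace ℝ (Fin 2)) :
    ENNReal.ofReal (‖x‖ - y) ≤ Metric.infEDist x (Ell lam y) := by
  refine Metric.le_infEDist.2 fun b hb => ?_
  rw [edist_dist, dist_eq_norm]
  refine ENNReal.ofReal_le_ofReal ?_
  calc ‖x‖ - y = ‖x‖ - ‖stretch lam b‖ := by rw [(mem_Ell_iff_norm_stretch hy).1 hb]
    _ ≤ ‖x‖ - ‖b‖ := by gcongr; exact norm_le_norm_stretch hlam b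
    _ ≤ ‖x - b‖ := norm_sub_norm_le x b

lemma not_isMetricFoliationFam_Ell {lam : ℝ} (hlam : 1 < lam) :
    ¬ IsMetricFoliationFam (fun z : {r : ℝ // 0 < r} => Ell lam z.1) := by
  rintro ⟨-, hfol⟩
  have hmem : pt 2 0 ∈ Ell lam 2 := by simp [Ell, pt_apply_zero, pt_apply_one]
  have hnorm : ‖pt 2 0‖ = 2 := by
    rw [← Real.sqrt_sq (norm_nonneg _), EuclideanSpace.norm_sq_eq_fin_two]
    simp [pt_apply_zero, pt_apply_one]
  have hfar := (ofReal_norm_sub_le_infEDist_Ell hlam.le zero_le_one (pt 2 0)).trans_eq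
    (hfol ⟨2, two_pos⟩ ⟨1, one_pos⟩ _ hmem)
  rw [setEDist_Ell hlam.le zero_le_two zero_le_one,
    ENNReal.ofReal_le_ofReal_iff (by positivity), hnorm] at hfar
  norm_num at hfar
  exact (inv_lt_one_of_one_lt₀ hlam).not_ge hfar

/-- For `λ > 1`, `y, y' > 0` and `p ∈ [1,∞)`, the Dirac measures
`μ_y = δ_{(0, y/λ)}` at the tops of the minor axes satisfy
`W_p(μ_y, μ_{y'}) = |y − y'|/λ = d(E_y, E_{y'})`. Thus the disintegration map `y ↦ μ_y` is an
isometry with respect to the fiber distance, even though `{E_y}` is not a metric foliation;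
so the full-support hypothesis in the classification theorem cannot be dropped. -/
theorem dirac_ellipse_isometry (lam : ℝ) (hlam : 1 < lam)
    (y y' : ℝ) (hy : 0 < y) (hy' : 0 < y') (p : ℝ) (hp : 1 ≤ p) :
    wassersteinE p (Measure.dirac (pt 0 (y / lam))) (Measure.dirac (pt 0 (y' / lam)))
      = ENNReal.ofReal (|y - y'| / lam) ∧
    setEDist (Ell lam y) (Ell lam y') = ENNReal.ofReal (|y - y'| / lam) ∧
    ¬ IsMetricFoliationFam (fun z : {r : ℝ // 0 < r} => Ell lam z.1) := by
  have hdist := setEDist_Ell hlam.le hy.le hy'.le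
  refine ⟨?_, hdist, not_isMetricFoliationFam_Ell hlam⟩
  rw [wassersteinE_dirac_dirac _ _ (by positivity), edist_pt_zero_div (zero_lt_one.trans hlam)]
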